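/- Let g₁, g₂ : 2^N → [0,1] be monotone submodular set functions. Then g(S) := 1 − (1 − g₁(S))·(1 − g₂(S)) is also monotone submodular (with values in [0,1]). -/

import Mathlib

/-!
Write `g = 1 - u * v` with `u = 1 - g₁` and `v = 1 - g₂`: these are nonnegative, antitone and
supermodular. Putting `u (a ⊔ b) = U`, `u a = U + s`, `u b = U + t` with `s, t ≥ 0`, so that
`u (a ⊓ b) ≥ U + s + t`, and likewise for `v` with primes, the product satisfies
`u v (a ⊔ b) + u v (a ⊓ b) - u v a - u v b ≥ s t' + t s' ≥ 0`,
so `u * v` is supermodular and antitone, whence `g` is submodular and monotone.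
-/

section Modularity

variable {α R : Type*} [Lattice α] [CommRing R] [LinearOrder R] [IsStrictOrderedRing R]

def IsSubmodular (f : α → R) : Prop :=
  ∀ a b, f (a ⊔ b) + f (a ⊓ b) ≤ f a + f b

def IsSupermodular (f : α → R) : Prop :=
  ∀ a b, f a + f b ≤ f (a ⊔ b) + f (a ⊓ b)

theorem IsSubmodular.const_sub {f : α → R} (hf : IsSubmodular f) (c : R) :
    IsSupermodular fun a ↦ c - f a := fun a b ↦ by linarith [hf a b]

theorem IsSupermodular.const_sub {f : α → R} (hf : IsSupermodular f) (c : R) :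
    IsSubmodular fun a ↦ c - f a := fun a b ↦ by linarith [hf a b]

theorem IsSupermodular.mul_of_antitone {f g : α → R} (hf : IsSupermodular f)
    (hg : IsSupermodular g) (hf_anti : Antitone f) (hg_anti : Antitone g)
    (hf₀ : ∀ x, 0 ≤ f x) (hg₀ : ∀ x, 0 ≤ g x) : IsSupermodular (f * g) := by
  intro a b
  have hfa : f (a ⊔ b) ≤ f a := hf_anti le_sup_left
  have hfb : f (a ⊔ b) ≤ f b := hf_anti le_sup_right
  have hga : g (a ⊔ b) ≤ g a := hg_anti le_sup_left
  have hgb : g (a ⊔ b) ≤ g b := hg_anti le_sup_right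
  have hinf : (f a + f b - f (a ⊔ b)) * (g a + g b - g (a ⊔ b)) ≤ f (a ⊓ b) * g (a ⊓ b) :=
    mul_le_mul (by linarith [hf a b]) (by linarith [hg a b]) (by linarith [hg₀ b]) (hf₀ _)
  simp only [Pi.mul_apply]
  linear_combination hinf + mul_nonneg (sub_nonneg.2 hfa) (sub_nonneg.2 hgb)
    + mul_nonneg (sub_nonneg.2 hfb) (sub_nonneg.2 hga)

end Modularity

theorem Antitone.mul_of_nonneg {α R : Type*} [Preorder α] [Semiring R] [PartialOrder R]
    [IsOrderedRing R] {f g : α → R} (hf : Antitone f) (hg : Antitone g)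
    (hf₀ : ∀ x, 0 ≤ f x) (hg₀ : ∀ x, 0 ≤ g x) : Antitone (f * g) :=
  fun _ _ h ↦ mul_le_mul (hf h) (hg h) (hg₀ _) (hf₀ _)

/-- `1 - (1 - g₁)(1 - g₂)` of two monotone submodular `[0,1]`-valued
functions is monotone submodular with values in `[0,1]`. -/
theorem stmt_2 {N : Type*} [DecidableEq N]
    (g₁ g₂ : Finset N → ℝ)
    (h₁range : ∀ S, g₁ S ∈ Set.Icc (0 : ℝ) 1)
    (h₂range : ∀ S, g₂ S ∈ Set.Icc (0 : ℝ) 1)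
    (h₁mono : ∀ S T : Finset N, S ⊆ T → g₁ S ≤ g₁ T)
    (h₂mono : ∀ S T : Finset N, S ⊆ T → g₂ S ≤ g₂ T)
    (h₁sub : ∀ S T : Finset N, g₁ (S ∪ T) + g₁ (S ∩ T) ≤ g₁ S + g₁ T)
    (h₂sub : ∀ S T : Finset N, g₂ (S ∪ T) + g₂ (S ∩ T) ≤ g₂ S + g₂ T)
    (g : Finset N → ℝ) (hg : ∀ S, g S = 1 - (1 - g₁ S) * (1 - g₂ S)) :
    (∀ S T : Finset N, S ⊆ T → g S ≤ g T) ∧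
    (∀ S T : Finset N, g (S ∪ T) + g (S ∩ T) ≤ g S + g T) ∧
    (∀ S, g S ∈ Set.Icc (0 : ℝ) 1) := by
  set u : Finset N → ℝ := fun S ↦ 1 - g₁ S
  set v : Finset N → ℝ := fun S ↦ 1 - g₂ S
  obtain rfl : g = fun S ↦ 1 - (u * v) S := funext hg
  have hu_anti : Antitone u := fun S T h ↦ sub_le_sub_left (h₁mono S T h) 1
  have hv_anti : Antitone v := fun S T h ↦ sub_le_sub_left (h₂mono S T h) 1
  have hu₀ (S : Finset N) : 0 ≤ u S := sub_nonneg.2 (h₁range S).2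
  have hv₀ (S : Finset N) : 0 ≤ v S := sub_nonneg.2 (h₂range S).2
  have h₁ : IsSubmodular g₁ := h₁sub
  have h₂ : IsSubmodular g₂ := h₂sub
  have huv_super : IsSupermodular (u * v) :=
    (h₁.const_sub 1).mul_of_antitone (h₂.const_sub 1) hu_anti hv_anti hu₀ hv₀
  refine ⟨fun S T h ↦ sub_le_sub_left (hu_anti.mul_of_nonneg hv_anti hu₀ hv₀ h) 1,
    huv_super.const_sub 1, fun S ↦ ?_⟩
  exact Set.Icc.one_sub_mem (unitInterval.mul_mem (Set.Icc.one_sub_mem (h₁range S))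
    (Set.Icc.one_sub_mem (h₂range S)))
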